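/- arXiv:1205.4809 — 3 statements merged into one kernel-verified Lean document; each statement's English description precedes it below -/
import Mathlib

section
/- If A and B are row stochastic square matrices of the same size, then δ(A·B) ≤ λ(A)·δ(B), where δ and λ are the coefficients of ergodicity defined by δ(M) = max_j max_{i1,i2} |M_{i1 j} - M_{i2 j}| and λ(M) = 1 - min_{i1,i2} Σ_j min(M_{i1 j}, M_{i2 j}). -/
open Finset

noncomputable def delta {I : Type*} [Fintype I] [Nonempty I] (A : Matrix I I ℝ) : ℝ :=
  univ.sup' univ_nonempty fun j =>
    univ.sup' univ_nonempty fun i1 =>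
      univ.sup' univ_nonempty fun i2 => |A i1 j - A i2 j|

noncomputable def lam {I : Type*} [Fintype I] [Nonempty I] (A : Matrix I I ℝ) : ℝ :=
  1 - univ.inf' univ_nonempty fun i1 : I =>
        univ.inf' univ_nonempty fun i2 : I => ∑ j, min (A i1 j) (A i2 j)

def RowStochastic {I : Type*} [Fintype I] (A : Matrix I I ℝ) : Prop :=
  (∀ i j, 0 ≤ A i j) ∧ ∀ i, ∑ j, A i j = 1

noncomputable def bprod {I : Type*} [Fintype I] [DecidableEq I]
    (M : ℕ → Matrix I I ℝ) (a b : ℕ) : Matrix I I ℝ :=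
  ((List.range (b + 1 - a)).map fun s => M (b - s)).prod

theorem stmt4 {I : Type*} [Fintype I] [Nonempty I] [DecidableEq I] (A B : Matrix I I ℝ)
    (hA : RowStochastic A) (hB : RowStochastic B) :
    delta (A * B) ≤ lam A * delta B := by
  classical
  have hdB : ∀ a b c, |B a c - B b c| ≤ delta B := by
    intro a b c
    exact le_trans (le_sup' (fun i2 => |B a c - B i2 c|) (mem_univ b))
      (le_trans (le_sup' (fun i1 => univ.sup' univ_nonempty fun i2 => |B i1 c - B i2 c|) (mem_univ a))
        (le_sup' (fun c => univ.sup' univ_nonempty fun i1 => univ.sup' univ_nonempty fun i2 => |B i1 c - B i2 c|) (mem_univ c)))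
  have hδB : 0 ≤ delta B := by
    obtain ⟨i⟩ := (inferInstance : Nonempty I)
    simpa using hdB i i i
  apply sup'_le; intro j _
  apply sup'_le; intro i1 _
  apply sup'_le; intro i2 _
  set d : I → ℝ := fun k => A i1 k - A i2 k with hd
  set p : I → ℝ := fun k => max (d k) 0 with hpdef
  set q : I → ℝ := fun k => max (-(d k)) 0 with hqdef
  have hpq : ∀ k, d k = p k - q k := by
    intro k; simp only [hpdef, hqdef]
    rcases le_total (d k) 0 with h | h
    · rw [max_eq_right h, max_eq_left (neg_nonneg.mpr h)]; ring
    · rw [max_eq_left h, max_eq_right (neg_nonpos.mpr h)]; ring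
  have hp0 : ∀ k, 0 ≤ p k := fun k => le_max_right _ _
  have hq0 : ∀ k, 0 ≤ q k := fun k => le_max_right _ _
  have hds : ∑ k, d k = 0 := by
    simp [hd, Finset.sum_sub_distrib, hA.2 i1, hA.2 i2]
  set s : ℝ := ∑ k, p k with hs
  have hqs : ∑ k, q k = s := by
    have := hds
    rw [Finset.sum_congr rfl (fun k _ => hpq k), Finset.sum_sub_distrib] at this
    linarith
  have habs : ∀ k, p k + q k = A i1 k + A i2 k - 2 * min (A i1 k) (A i2 k) := by
    intro k
    rcases le_total (A i1 k) (A i2 k) with h | h <;>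
      simp [hpdef, hqdef, hd, min_eq_left, min_eq_right, h, max_def] <;> split <;> linarith
  have hslam : s ≤ lam A := by
    have h1 : (univ.inf' univ_nonempty fun a : I =>
        univ.inf' univ_nonempty fun b : I => ∑ j, min (A a j) (A b j)) ≤
        ∑ k, min (A i1 k) (A i2 k) :=
      le_trans (inf'_le _ (mem_univ i1)) (inf'_le _ (mem_univ i2))
    have h2 : 2 * s = 2 - 2 * ∑ k, min (A i1 k) (A i2 k) := by
      have : ∑ k, (p k + q k) = ∑ k, (A i1 k + A i2 k - 2 * min (A i1 k) (A i2 k)) :=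
        Finset.sum_congr rfl fun k _ => habs k
      rw [Finset.sum_add_distrib] at this
      simp only [Finset.sum_sub_distrib, Finset.sum_add_distrib, hA.2 i1, hA.2 i2,
        ← Finset.mul_sum] at this
      rw [hqs] at this
      linarith
    simp only [lam]
    linarith
  have hABd : (A * B) i1 j - (A * B) i2 j = ∑ k, d k * B k j := by
    simp [Matrix.mul_apply, hd, Finset.sum_sub_distrib, sub_mul]
  have key : ∑ k, ∑ l, p k * q l * (B k j - B l j) = s * ∑ k, d k * B k j := by
    have inner : ∀ k, ∑ l, p k * q l * (B k j - B l j)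
        = p k * B k j * s - p k * ∑ l, q l * B l j := by
      intro k
      rw [Finset.sum_congr rfl fun l _ => (by ring :
        p k * q l * (B k j - B l j) = p k * B k j * q l - p k * (q l * B l j)),
        Finset.sum_sub_distrib, ← Finset.mul_sum, ← Finset.mul_sum, hqs]
    rw [Finset.sum_congr rfl fun k _ => inner k, Finset.sum_sub_distrib,
      ← Finset.sum_mul, ← Finset.sum_mul, ← hs]
    have hdsum : ∑ k, d k * B k j = ∑ k, p k * B k j - ∑ k, q k * B k j := by
      rw [← Finset.sum_sub_distrib]
      exact Finset.sum_congr rfl fun k _ => by rw [hpq k]; ring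
    rw [hdsum]; ring
  have bound : |∑ k, ∑ l, p k * q l * (B k j - B l j)| ≤ s * s * delta B := by
    calc |∑ k, ∑ l, p k * q l * (B k j - B l j)|
        ≤ ∑ k, ∑ l, |p k * q l * (B k j - B l j)| := by
          refine (Finset.abs_sum_le_sum_abs _ _).trans ?_
          exact Finset.sum_le_sum fun k _ => Finset.abs_sum_le_sum_abs _ _
      _ ≤ ∑ k, ∑ l, p k * q l * delta B := by
          refine Finset.sum_le_sum fun k _ => Finset.sum_le_sum fun l _ => ?_
          rw [abs_mul, abs_of_nonneg (mul_nonneg (hp0 k) (hq0 l))]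
          exact mul_le_mul_of_nonneg_left (hdB _ _ _) (mul_nonneg (hp0 k) (hq0 l))
      _ = s * s * delta B := by
          simp only [← Finset.sum_mul, ← Finset.mul_sum]
          rw [hqs]
  have final : |∑ k, d k * B k j| ≤ lam A * delta B := by
    rcases eq_or_lt_of_le (Finset.sum_nonneg fun k _ => hp0 k) with h0 | h0
    · have hp : ∀ k ∈ univ, p k = 0 := by
        intro k _
        exact (Finset.sum_eq_zero_iff_of_nonneg (fun k _ => hp0 k)).mp h0.symm k (mem_univ k)
      have hq : ∀ k ∈ univ, q k = 0 := by
        have : ∑ k, q k = 0 := by rw [hqs, hs, ← h0]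
        exact fun k _ => (Finset.sum_eq_zero_iff_of_nonneg (fun k _ => hq0 k)).mp this k (mem_univ k)
      have : ∀ k, d k = 0 := fun k => by rw [hpq k, hp k (mem_univ k), hq k (mem_univ k)]; ring
      simp only [this, zero_mul, Finset.sum_const_zero, abs_zero]
      exact mul_nonneg (le_trans (le_of_eq (h0.trans hs.symm)) hslam) hδB
    · have hspos : 0 < s := lt_of_lt_of_le h0 (le_of_eq hs.symm)
      have : s * |∑ k, d k * B k j| ≤ s * (s * delta B) := by
        have e : s * |∑ k, d k * B k j| = |∑ k, ∑ l, p k * q l * (B k j - B l j)| := by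
          rw [key, abs_mul, abs_of_pos hspos]
        rw [e]
        calc |∑ k, ∑ l, p k * q l * (B k j - B l j)| ≤ s * s * delta B := bound
          _ = s * (s * delta B) := by ring
      have h1 : |∑ k, d k * B k j| ≤ s * delta B := le_of_mul_le_mul_left this hspos
      exact h1.trans (mul_le_mul_of_nonneg_right hslam hδB)
  rw [hABd]; exact final
end

section
/- For any finite family Q(1),...,Q(p) of row stochastic square matrices of the same size, δ(Q(p)Q(p-1)···Q(1)) ≤ Π_{i=1}^p λ(Q(i)). -/
open Finset

section aux

variable {I : Type*} [Fintype I] [Nonempty I]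

lemma abs_sub_le_delta (A : Matrix I I ℝ) (i1 i2 j : I) :
    |A i1 j - A i2 j| ≤ delta A := by
  have h1 : |A i1 j - A i2 j| ≤ univ.sup' univ_nonempty fun i2' => |A i1 j - A i2' j| :=
    le_sup' (fun i2' => |A i1 j - A i2' j|) (mem_univ i2)
  have h2 : (univ.sup' univ_nonempty fun i2' => |A i1 j - A i2' j|) ≤
      univ.sup' univ_nonempty fun i1' =>
        univ.sup' univ_nonempty fun i2' => |A i1' j - A i2' j| :=
    le_sup' (fun i1' => univ.sup' univ_nonempty fun i2' => |A i1' j - A i2' j|) (mem_univ i1)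
  have h3 : (univ.sup' univ_nonempty fun i1' =>
      univ.sup' univ_nonempty fun i2' => |A i1' j - A i2' j|) ≤ delta A :=
    le_sup' (fun j' => univ.sup' univ_nonempty fun i1' =>
      univ.sup' univ_nonempty fun i2' => |A i1' j' - A i2' j'|) (mem_univ j)
  exact h1.trans (h2.trans h3)

lemma delta_nonneg (A : Matrix I I ℝ) : 0 ≤ delta A := by
  obtain ⟨i⟩ := ‹Nonempty I›
  have := abs_sub_le_delta A i i i
  simpa using this

lemma lam_nonneg (A : Matrix I I ℝ) (hA : RowStochastic A) : 0 ≤ lam A := by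
  obtain ⟨i⟩ := ‹Nonempty I›
  have h1 : (univ.inf' univ_nonempty fun i1 : I =>
      univ.inf' univ_nonempty fun i2 : I => ∑ j, min (A i1 j) (A i2 j)) ≤
      univ.inf' univ_nonempty fun i2 : I => ∑ j, min (A i j) (A i2 j) :=
    inf'_le _ (mem_univ i)
  have h2 : (univ.inf' univ_nonempty fun i2 : I => ∑ j, min (A i j) (A i2 j)) ≤
      ∑ j, min (A i j) (A i j) := inf'_le _ (mem_univ i)
  have h3 : ∑ j, min (A i j) (A i j) = 1 := by simp [hA.2 i]
  unfold lam; linarith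

lemma sum_mul_le_half (a b : I → ℝ) (ha : ∑ k, a k = 0) :
    ∑ k, a k * b k ≤ ((∑ k, |a k|) / 2) *
      ((univ.sup' univ_nonempty b) - (univ.inf' univ_nonempty b)) := by
  set m := univ.inf' univ_nonempty b with hm
  set Mx := univ.sup' univ_nonempty b with hMx
  have h1 : ∑ k, a k * b k = ∑ k, a k * (b k - m) := by
    simp [mul_sub, Finset.sum_sub_distrib, ← Finset.sum_mul, ha]
  have h2 : ∀ k, a k * (b k - m) ≤ max (a k) 0 * (Mx - m) := by
    intro k
    have hbm : m ≤ b k := inf'_le _ (mem_univ k)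
    have hbM : b k ≤ Mx := le_sup' _ (mem_univ k)
    have hstep : a k * (b k - m) ≤ max (a k) 0 * (b k - m) :=
      mul_le_mul_of_nonneg_right (le_max_left _ _) (by linarith)
    exact hstep.trans (mul_le_mul_of_nonneg_left (by linarith) (le_max_right _ _))
  have hmax : ∀ k, max (a k) 0 = (a k + |a k|) / 2 := by
    intro k
    rcases le_total (a k) 0 with h | h
    · rw [max_eq_right h, abs_of_nonpos h]; ring
    · rw [max_eq_left h, abs_of_nonneg h]; ring
  calc ∑ k, a k * b k = ∑ k, a k * (b k - m) := h1
    _ ≤ ∑ k, max (a k) 0 * (Mx - m) := Finset.sum_le_sum fun k _ => h2 k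
    _ = (∑ k, max (a k) 0) * (Mx - m) := by rw [← Finset.sum_mul]
    _ = ((∑ k, |a k|) / 2) * (Mx - m) := by
        congr 1
        simp only [hmax]
        rw [← Finset.sum_div, Finset.sum_add_distrib, ha, zero_add]

lemma sup_sub_inf_le_delta (B : Matrix I I ℝ) (j : I) :
    (univ.sup' univ_nonempty fun k => B k j) - (univ.inf' univ_nonempty fun k => B k j)
      ≤ delta B := by
  obtain ⟨k1, _, hk1⟩ := Finset.exists_mem_eq_sup' univ_nonempty (fun k => B k j)
  obtain ⟨k2, _, hk2⟩ := Finset.exists_mem_eq_inf' univ_nonempty (fun k => B k j)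
  rw [hk1, hk2]
  have := abs_sub_le_delta B k1 k2 j
  have habs : B k1 j - B k2 j ≤ |B k1 j - B k2 j| := le_abs_self _
  linarith

lemma half_sum_abs_le_lam (A : Matrix I I ℝ) (hA : RowStochastic A) (i1 i2 : I) :
    (∑ k, |A i1 k - A i2 k|) / 2 ≤ lam A := by
  have habs : ∀ k, |A i1 k - A i2 k| = A i1 k + A i2 k - 2 * min (A i1 k) (A i2 k) := by
    intro k
    rcases le_total (A i1 k) (A i2 k) with h | h
    · rw [abs_of_nonpos (by linarith), min_eq_left h]; ring
    · rw [abs_of_nonneg (by linarith), min_eq_right h]; ring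
  have hsum : ∑ k, |A i1 k - A i2 k| = 2 - 2 * ∑ k, min (A i1 k) (A i2 k) := by
    simp only [habs]
    rw [Finset.sum_sub_distrib, Finset.sum_add_distrib, hA.2 i1, hA.2 i2, ← Finset.mul_sum]
    ring
  have h1 : (univ.inf' univ_nonempty fun i1' : I =>
      univ.inf' univ_nonempty fun i2' : I => ∑ j, min (A i1' j) (A i2' j)) ≤
      univ.inf' univ_nonempty fun i2' : I => ∑ j, min (A i1 j) (A i2' j) :=
    inf'_le _ (mem_univ i1)
  have h2 : (univ.inf' univ_nonempty fun i2' : I => ∑ j, min (A i1 j) (A i2' j)) ≤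
      ∑ j, min (A i1 j) (A i2 j) := inf'_le _ (mem_univ i2)
  unfold lam
  rw [hsum]
  linarith

lemma key (A B : Matrix I I ℝ) (hA : RowStochastic A) :
    delta (A * B) ≤ lam A * delta B := by
  have hdir : ∀ i1 i2 j : I, (A * B) i1 j - (A * B) i2 j ≤ lam A * delta B := by
    intro i1 i2 j
    have hsum0 : ∑ k, (A i1 k - A i2 k) = 0 := by
      rw [Finset.sum_sub_distrib, hA.2 i1, hA.2 i2, sub_self]
    have h := sum_mul_le_half (fun k => A i1 k - A i2 k) (fun k => B k j) hsum0
    have heq : (A * B) i1 j - (A * B) i2 j = ∑ k, (A i1 k - A i2 k) * B k j := by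
      simp [Matrix.mul_apply, Finset.sum_sub_distrib, sub_mul]
    rw [heq]
    refine h.trans ?_
    have hfac1 : (∑ k, |A i1 k - A i2 k|) / 2 ≤ lam A := half_sum_abs_le_lam A hA i1 i2
    have hfac2 : (univ.sup' univ_nonempty fun k => B k j) -
        (univ.inf' univ_nonempty fun k => B k j) ≤ delta B := sup_sub_inf_le_delta B j
    have hnn1 : 0 ≤ (∑ k, |A i1 k - A i2 k|) / 2 := by
      have : 0 ≤ ∑ k, |A i1 k - A i2 k| := Finset.sum_nonneg fun k _ => abs_nonneg _
      linarith
    have hnn2 : 0 ≤ (univ.sup' univ_nonempty fun k => B k j) -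
        (univ.inf' univ_nonempty fun k => B k j) := by
      obtain ⟨i⟩ := ‹Nonempty I›
      have h1 : (univ.inf' univ_nonempty fun k => B k j) ≤ B i j := inf'_le _ (mem_univ i)
      have h2 : B i j ≤ univ.sup' univ_nonempty fun k => B k j := le_sup' (fun k => B k j) (mem_univ i)
      linarith
    exact mul_le_mul hfac1 hfac2 hnn2 (lam_nonneg A hA)
  apply Finset.sup'_le
  intro j _
  apply Finset.sup'_le
  intro i1 _
  apply Finset.sup'_le
  intro i2 _
  rw [abs_sub_le_iff]
  exact ⟨hdir i1 i2 j, hdir i2 i1 j⟩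

lemma delta_one_le [DecidableEq I] : delta (1 : Matrix I I ℝ) ≤ 1 := by
  classical
  apply Finset.sup'_le; intro j _
  apply Finset.sup'_le; intro i1 _
  apply Finset.sup'_le; intro i2 _
  have h1 : (0:ℝ) ≤ (1 : Matrix I I ℝ) i1 j ∧ (1 : Matrix I I ℝ) i1 j ≤ 1 := by
    rw [Matrix.one_apply]; split <;> norm_num
  have h2 : (0:ℝ) ≤ (1 : Matrix I I ℝ) i2 j ∧ (1 : Matrix I I ℝ) i2 j ≤ 1 := by
    rw [Matrix.one_apply]; split <;> norm_num
  rw [abs_sub_le_iff]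
  constructor <;> linarith [h1.1, h1.2, h2.1, h2.2]

end aux

theorem stmt5 {I : Type*} [Fintype I] [Nonempty I] [DecidableEq I] (p : ℕ) (Q : Fin p → Matrix I I ℝ)
    (hQ : ∀ i, RowStochastic (Q i)) :
    delta ((List.ofFn Q).reverse.prod) ≤ ∏ i, lam (Q i) := by
  induction p with
  | zero => simpa using delta_one_le (I := I)
  | succ n ih =>
    have hlist : (List.ofFn Q).reverse.prod =
        Q (Fin.last n) * (List.ofFn (Q ∘ Fin.castSucc)).reverse.prod := by
      rw [List.ofFn_succ', List.concat_eq_append, List.reverse_append]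
      simp only [Function.comp_def]
      simp
    rw [hlist, Fin.prod_univ_castSucc]
    have h1 : delta (Q (Fin.last n) * (List.ofFn (Q ∘ Fin.castSucc)).reverse.prod) ≤
        lam (Q (Fin.last n)) * delta ((List.ofFn (Q ∘ Fin.castSucc)).reverse.prod) :=
      key _ _ (hQ _)
    have h2 := ih (Q ∘ Fin.castSucc) (fun i => hQ _)
    calc delta (Q (Fin.last n) * (List.ofFn (Q ∘ Fin.castSucc)).reverse.prod)
        ≤ lam (Q (Fin.last n)) * delta ((List.ofFn (Q ∘ Fin.castSucc)).reverse.prod) := h1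
      _ ≤ lam (Q (Fin.last n)) * ∏ i, lam ((Q ∘ Fin.castSucc) i) :=
          mul_le_mul_of_nonneg_left h2 (lam_nonneg _ (hQ _))
      _ = (∏ i : Fin n, lam (Q (Fin.castSucc i))) * lam (Q (Fin.last n)) := by
          simp [mul_comm]
end

section
/- If M(1), M(2), ... is a sequence of row stochastic square matrices and there exist constants γ ∈ (0,1] and a positive integer T such that each block product Q(i) = M(iT)···M((i-1)T+1) satisfies λ(Q(i)) ≤ 1 - γ, then δ of the backward product M(t)···M(1) tends to 0 as t → ∞. -/
/-!
Hajnal's inequality δ(AB) ≤ λ(A) δ(B) holds whenever A has unit row sums. Splitting the backward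
product M(t)⋯M(1) into the blocks Q(i) and a leftover factor of coefficient λ ≤ 1 gives
δ(M(t)⋯M(1)) ≤ (1 - γ)^⌊t/T⌋, which tends to 0.
-/

open Finset

section BackwardProduct

variable {I : Type*} [Fintype I] [DecidableEq I]

lemma rowStochastic_iff_mem_rowStochastic {A : Matrix I I ℝ} :
    RowStochastic A ↔ A ∈ Matrix.rowStochastic ℝ I :=
  Matrix.mem_rowStochastic_iff_sum.symm

lemma RowStochastic.bprod {M : ℕ → Matrix I I ℝ} (hM : ∀ t, RowStochastic (M t)) (a b : ℕ) :
    RowStochastic (bprod M a b) := by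
  rw [rowStochastic_iff_mem_rowStochastic]
  refine Submonoid.list_prod_mem _ fun A hA => ?_
  obtain ⟨s, -, rfl⟩ := List.mem_map.1 hA
  exact rowStochastic_iff_mem_rowStochastic.1 (hM _)

lemma bprod_eq_mul (M : ℕ → Matrix I I ℝ) {a b c : ℕ} (hab : a ≤ b + 1) (hbc : b ≤ c) :
    bprod M a c = bprod M (b + 1) c * bprod M a b := by
  unfold bprod
  rw [← List.prod_append, show c + 1 - a = (c - b) + (b + 1 - a) by omega, List.range_add,
    List.map_append, List.map_map, show c + 1 - (b + 1) = c - b by omega]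
  congr 2
  refine List.map_congr_left fun s _ => ?_
  simp only [Function.comp_apply]
  congr 1
  omega

end BackwardProduct

section Coefficients

variable {I : Type*} [Fintype I] [Nonempty I]

lemma delta_le_iff {A : Matrix I I ℝ} {c : ℝ} :
    delta A ≤ c ↔ ∀ i1 i2 j, |A i1 j - A i2 j| ≤ c := by
  simp only [delta, Finset.sup'_le_iff, mem_univ, true_imp_iff]
  exact ⟨fun h i1 i2 j => h j i1 i2, fun h j i1 i2 => h i1 i2 j⟩

lemma delta_le_of_sub_le {A : Matrix I I ℝ} {c : ℝ} (h : ∀ i1 i2 j, A i1 j - A i2 j ≤ c) :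
    delta A ≤ c :=
  delta_le_iff.2 fun i1 i2 j => abs_sub_le_iff.2 ⟨h i1 i2 j, h i2 i1 j⟩

lemma one_sub_sum_min_le_lam (A : Matrix I I ℝ) (i1 i2 : I) :
    1 - ∑ j, min (A i1 j) (A i2 j) ≤ lam A := by
  have h : (univ.inf' univ_nonempty fun i1 : I =>
      univ.inf' univ_nonempty fun i2 : I => ∑ j, min (A i1 j) (A i2 j))
      ≤ ∑ j, min (A i1 j) (A i2 j) :=
    (Finset.inf'_le _ (mem_univ i1)).trans (Finset.inf'_le _ (mem_univ i2))
  unfold lam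
  linarith

lemma RowStochastic.lam_le_one {A : Matrix I I ℝ} (hA : RowStochastic A) : lam A ≤ 1 := by
  have h : (0 : ℝ) ≤ univ.inf' univ_nonempty fun i1 : I =>
      univ.inf' univ_nonempty fun i2 : I => ∑ j, min (A i1 j) (A i2 j) :=
    Finset.le_inf' _ _ fun i1 _ => Finset.le_inf' _ _ fun i2 _ =>
      Finset.sum_nonneg fun j _ => le_min (hA.1 i1 j) (hA.1 i2 j)
  unfold lam
  linarith

/-- Hajnal's inequality. -/
lemma delta_mul_le {A : Matrix I I ℝ} (hA : ∀ i, ∑ j, A i j = 1) (B : Matrix I I ℝ) :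
    delta (A * B) ≤ lam A * delta B := by
  refine delta_le_of_sub_le fun i1 i2 j => ?_
  obtain ⟨k0, -, hk0⟩ := Finset.exists_min_image univ (fun k => B k j) univ_nonempty
  -- Equal row sums let us subtract the column minimum `B k0 j`, making every `B`-factor nonnegative.
  have hshift : (A * B) i1 j - (A * B) i2 j = ∑ k, (A i1 k - A i2 k) * (B k j - B k0 j) := by
    simp only [sub_mul, mul_sub, Finset.sum_sub_distrib, Matrix.mul_apply, ← Finset.sum_mul,
      hA i1, hA i2]
    ring
  have hterm : ∀ k, (A i1 k - A i2 k) * (B k j - B k0 j)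
      ≤ (A i1 k - min (A i1 k) (A i2 k)) * delta B := by
    intro k
    have hB : 0 ≤ B k j - B k0 j := sub_nonneg.2 (hk0 k (mem_univ k))
    calc (A i1 k - A i2 k) * (B k j - B k0 j)
        ≤ (A i1 k - min (A i1 k) (A i2 k)) * (B k j - B k0 j) :=
          mul_le_mul_of_nonneg_right (by linarith [min_le_right (A i1 k) (A i2 k)]) hB
      _ ≤ (A i1 k - min (A i1 k) (A i2 k)) * delta B :=
          mul_le_mul_of_nonneg_left ((le_abs_self _).trans (abs_sub_le_delta B k k0 j))
            (sub_nonneg.2 (min_le_left _ _))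
  calc (A * B) i1 j - (A * B) i2 j
      ≤ ∑ k, (A i1 k - min (A i1 k) (A i2 k)) * delta B := by
        rw [hshift]; exact Finset.sum_le_sum fun k _ => hterm k
    _ = (1 - ∑ k, min (A i1 k) (A i2 k)) * delta B := by
        rw [← Finset.sum_mul, Finset.sum_sub_distrib, hA i1]
    _ ≤ lam A * delta B :=
        mul_le_mul_of_nonneg_right (one_sub_sum_min_le_lam A i1 i2) (delta_nonneg B)

end Coefficients

section BlockProducts

variable {I : Type*} [Fintype I] [Nonempty I] [DecidableEq I]

lemma RowStochastic.delta_le_one {A : Matrix I I ℝ} (hA : RowStochastic A) : delta A ≤ 1 := by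
  have hA' := rowStochastic_iff_mem_rowStochastic.1 hA
  refine delta_le_of_sub_le fun i1 i2 j => ?_
  linarith [Matrix.le_one_of_mem_rowStochastic hA' (i := i1) (j := j), hA.1 i2 j]

variable {M : ℕ → Matrix I I ℝ} (hM : ∀ t, RowStochastic (M t))
include hM

lemma delta_bprod_le_lam_mul {a b c : ℕ} (hab : a ≤ b + 1) (hbc : b ≤ c) :
    delta (bprod M a c) ≤ lam (bprod M (b + 1) c) * delta (bprod M a b) := by
  rw [bprod_eq_mul M hab hbc]
  exact delta_mul_le (RowStochastic.bprod hM _ _).2 _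

variable {c : ℝ} (hc : 0 ≤ c) {T : ℕ} (hblock : ∀ n, lam (bprod M (n * T + 1) ((n + 1) * T)) ≤ c)
include hc hblock

lemma delta_bprod_mul_le_pow (n : ℕ) : delta (bprod M 1 (n * T)) ≤ c ^ n := by
  induction n with
  | zero => simpa using (RowStochastic.bprod hM 1 0).delta_le_one
  | succ n ih =>
    calc delta (bprod M 1 ((n + 1) * T))
        ≤ lam (bprod M (n * T + 1) ((n + 1) * T)) * delta (bprod M 1 (n * T)) :=
          delta_bprod_le_lam_mul hM (by omega) (by nlinarith)
      _ ≤ c * c ^ n := mul_le_mul (hblock n) ih (delta_nonneg _) hc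
      _ = c ^ (n + 1) := (pow_succ' c n).symm

lemma delta_bprod_le_pow_div (t : ℕ) : delta (bprod M 1 t) ≤ c ^ (t / T) :=
  calc delta (bprod M 1 t)
      ≤ lam (bprod M (t / T * T + 1) t) * delta (bprod M 1 (t / T * T)) :=
        delta_bprod_le_lam_mul hM (by omega) (Nat.div_mul_le_self t T)
    _ ≤ 1 * c ^ (t / T) :=
        mul_le_mul (RowStochastic.bprod hM _ _).lam_le_one
          (delta_bprod_mul_le_pow hM hc hblock _) (delta_nonneg _) zero_le_one
    _ = c ^ (t / T) := one_mul _

end BlockProducts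

theorem stmt8 {I : Type*} [Fintype I] [Nonempty I] [DecidableEq I] (M : ℕ → Matrix I I ℝ)
    (hM : ∀ t, RowStochastic (M t)) (γ : ℝ) (T : ℕ)
    (hγ0 : 0 < γ) (hγ1 : γ ≤ 1) (hT : 0 < T)
    (hblock : ∀ i : ℕ, 1 ≤ i → lam (bprod M ((i - 1) * T + 1) (i * T)) ≤ 1 - γ) :
    Filter.Tendsto (fun t => delta (bprod M 1 t)) Filter.atTop (nhds 0) := by
  have hc : 0 ≤ 1 - γ := by linarith
  have hblock' : ∀ n, lam (bprod M (n * T + 1) ((n + 1) * T)) ≤ 1 - γ := fun n => by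
    simpa using hblock (n + 1) (by omega)
  have hpow : Filter.Tendsto (fun t : ℕ => (1 - γ) ^ (t / T)) Filter.atTop (nhds 0) :=
    (tendsto_pow_atTop_nhds_zero_of_lt_one hc (by linarith)).comp
      (Nat.tendsto_div_const_atTop hT.ne')
  exact squeeze_zero (fun t => delta_nonneg _) (delta_bprod_le_pow_div hM hc hblock') hpow
end
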